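/- Each of the five sets of triples on a three-element set {a,b,c} — ∅, {(a,b,c)}, {(a,b,c),(c,b,a)}, {(a,b,c),(b,c,a)}, and {(a,b,c),(b,c,a),(c,a,b)} — is the betweenness of some quasi-metric on {a,b,c}. -/

import Mathlib

/-- A quasi-metric on `V`: nonnegative, vanishing exactly on the diagonal,
and satisfying the (directed) triangle inequality. -/
def IsQuasiMetric {V : Type*} (d : V → V → ℝ) : Prop :=
  (∀ x y, 0 ≤ d x y) ∧ (∀ x y, d x y = 0 ↔ x = y) ∧ (∀ x y z, d x z ≤ d x y + d y z)

/-- Betweenness: `y` lies between `x` and `z` (all three pairwise distinct). -/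
def BtwQM {V : Type*} (d : V → V → ℝ) (x y z : V) : Prop :=
  x ≠ y ∧ y ≠ z ∧ x ≠ z ∧ d x z = d x y + d y z

/-- The line through `x` and `y`. -/
def lineQM {V : Type*} (d : V → V → ℝ) (x y : V) : Set V :=
  {z | d z y = d z x + d x y ∨ d x y = d x z + d z y ∨ d x z = d x y + d y z}

/-- The set of all lines of the space. -/
def linesQM {V : Type*} (d : V → V → ℝ) : Set (Set V) :=
  {ℓ | ∃ x y, x ≠ y ∧ ℓ = lineQM d x y}

/-- The five candidate betweennesses on a three-element set `{a, b, c}`. -/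
def trip3 {V : Type*} (a b c : V) : Fin 5 → Set (V × V × V)
  | 0 => ∅
  | 1 => {(a, b, c)}
  | 2 => {(a, b, c), (c, b, a)}
  | 3 => {(a, b, c), (b, c, a)}
  | 4 => {(a, b, c), (b, c, a), (c, a, b)}

/-- A three-element set `{a, b, c}`. -/
inductive P3 : Type
  | a | b | c
deriving DecidableEq


/-!
If every off-diagonal distance lies in `[1, 2]`, the triangle inequality holds automatically
(any two nonzero legs sum to at least `2`), and equality `d x z = d x y + d y z` with distinct
points forces `d x y = d y z = 1` and `d x z = 2`. So on `{a, b, c}` it suffices to choose which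
directed pairs get distance `1` and which get `2`, filling the rest with `3 / 2`.
-/

open Set

section Icc

variable {V : Type*} {d : V → V → ℝ}

theorem IsQuasiMetric.of_mem_Icc (hdiag : ∀ x, d x x = 0)
    (hoff : ∀ x y, x ≠ y → d x y ∈ Icc (1 : ℝ) 2) : IsQuasiMetric d := by
  have nonneg : ∀ x y, 0 ≤ d x y := fun x y => by
    by_cases h : x = y
    · simp [h, hdiag]
    · linarith [(hoff x y h).1]
  refine ⟨nonneg, fun x y => ⟨fun h0 => ?_, fun h => h ▸ hdiag x⟩, fun x y z => ?_⟩
  · by_contra hxy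
    linarith [(hoff x y hxy).1]
  · by_cases hxz : x = z
    · subst hxz
      linarith [hdiag x, nonneg x y, nonneg y x]
    by_cases hxy : x = y
    · subst hxy
      linarith [hdiag x]
    by_cases hyz : y = z
    · subst hyz
      linarith [hdiag y]
    linarith [(hoff x z hxz).2, (hoff x y hxy).1, (hoff y z hyz).1]

theorem btwQM_iff_of_mem_Icc (hoff : ∀ x y, x ≠ y → d x y ∈ Icc (1 : ℝ) 2) {x y z : V} :
    BtwQM d x y z ↔ x ≠ y ∧ y ≠ z ∧ x ≠ z ∧ d x y = 1 ∧ d y z = 1 ∧ d x z = 2 := by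
  constructor
  · rintro ⟨hxy, hyz, hxz, hsum⟩
    obtain ⟨hxy₁, hxy₂⟩ := hoff x y hxy
    obtain ⟨hyz₁, hyz₂⟩ := hoff y z hyz
    obtain ⟨-, hxz₂⟩ := hoff x z hxz
    exact ⟨hxy, hyz, hxz, by linarith, by linarith, by linarith⟩
  · rintro ⟨hxy, hyz, hxz, h1, h2, h3⟩
    exact ⟨hxy, hyz, hxz, by rw [h1, h2, h3]; norm_num⟩

end Icc

namespace P3

def tabulate (ab bc ca ac cb ba : ℝ) : P3 → P3 → ℝ
  | a, b => ab | b, c => bc | c, a => ca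
  | a, c => ac | c, b => cb | b, a => ba
  | _, _ => 0

noncomputable def witness : Fin 5 → P3 → P3 → ℝ
  | 0 => tabulate 1 1 1 1 1 1
  | 1 => tabulate 1 1 (3 / 2) 2 (3 / 2) (3 / 2)
  | 2 => tabulate 1 1 2 2 1 1
  | 3 => tabulate 1 1 1 2 (3 / 2) 2
  | 4 => tabulate 1 1 1 2 2 2

theorem witness_self (i : Fin 5) (x : P3) : witness i x x = 0 := by
  fin_cases i <;> cases x <;> rfl

theorem witness_mem_Icc (i : Fin 5) (x y : P3) (hxy : x ≠ y) : witness i x y ∈ Icc (1 : ℝ) 2 := by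
  fin_cases i <;> cases x <;> cases y <;> first | exact absurd rfl hxy | norm_num [witness, tabulate]

theorem isQuasiMetric_witness (i : Fin 5) : IsQuasiMetric (witness i) :=
  .of_mem_Icc (witness_self i) (witness_mem_Icc i)

theorem setOf_btwQM_witness (i : Fin 5) :
    {t : P3 × P3 × P3 | BtwQM (witness i) t.1 t.2.1 t.2.2} = trip3 P3.a P3.b P3.c i := by
  ext ⟨x, y, z⟩
  refine (btwQM_iff_of_mem_Icc (witness_mem_Icc i)).trans ?_
  fin_cases i <;> cases x <;> cases y <;> cases z <;>
    simp [witness, tabulate, trip3] <;> norm_num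

end P3

/-- each of the five sets of triples on `{a, b, c}` is the
betweenness of some quasi-metric on `{a, b, c}`. -/
theorem stmt_12 :
    ∀ i : Fin 5, ∃ d : P3 → P3 → ℝ, IsQuasiMetric d ∧
      {t : P3 × P3 × P3 | BtwQM d t.1 t.2.1 t.2.2} = trip3 P3.a P3.b P3.c i :=
  fun i => ⟨P3.witness i, P3.isQuasiMetric_witness i, P3.setOf_btwQM_witness i⟩
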